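/- arXiv:2605.14342 — 2 statements merged into one kernel-verified Lean document; each statement's English description precedes it below -/
import Mathlib

section
/- For all integers n ≥ 0 and k ≥ 1 and every nonzero real number a, C(n+k, k)_F equals the determinant of the k×k matrix B (rows and columns indexed 1,…,k) defined by B(i,j) = (−1)^{(i−j+1)(i−j)/2} a^{−(i−j)} C(n+1, i−j+1)_F for i ≥ j, B(i, i+1) = a, and B(i,j) = 0 for j > i+1. -/
/-- The Fibonomial coefficient `C(n,k)_F = ∏_{r=1}^{k} F_{n-r+1}/F_r`, as a real number.
It equals `0` when `k > n` and `1` when `k = 0`. -/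
noncomputable def fibonomial (n k : ℕ) : ℝ :=
  ∏ r ∈ Finset.range k, (Nat.fib (n - r) : ℝ) / (Nat.fib (r + 1) : ℝ)

/-!
By Binet's formula `C(N,k)_F` is the `(α, β)`-binomial coefficient for `α = φ`, `β = ψ`. Hence
`e_j = (-1)^(j(j+1)/2) C(n+1,j)_F` and `h_l = C(n+l,l)_F` are the coefficients of
`∏_{i ≤ n} (1 - φ^(n-i) ψ^i X)` and of its inverse, so their convolution is `δ_{m,0}`.
This says that the Hessenberg–Toeplitz matrix maps the vector `(h_l / (-a)^l)_l` to a multiple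
of the last basis vector; Cramer's rule for the first coordinate then gives the determinant.
-/

open Finset PowerSeries Matrix

section Lucasnomial

variable {K : Type*} [Field K] (α β : K)

/-- For `(α, β) = (1, q)` these are the Gaussian binomial coefficients. -/
noncomputable def lucasnomial (N k : ℕ) : K :=
  ∏ r ∈ range k, (α ^ (N - r) - β ^ (N - r)) / (α ^ (r + 1) - β ^ (r + 1))

@[simp]
theorem lucasnomial_zero_right (N : ℕ) : lucasnomial α β N 0 = 1 := prod_range_zero _

theorem lucasnomial_eq_zero_of_lt {N k : ℕ} (h : N < k) : lucasnomial α β N k = 0 :=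
  prod_eq_zero (mem_range.2 h) (by simp)

theorem lucasnomial_succ_right (N k : ℕ) : lucasnomial α β N (k + 1) =
    (α ^ (N - k) - β ^ (N - k)) / (α ^ (k + 1) - β ^ (k + 1)) * lucasnomial α β N k :=
  (prod_range_succ _ _).trans (mul_comm _ _)

theorem lucasnomial_succ_succ_eq_div_mul (N k : ℕ) : lucasnomial α β (N + 1) (k + 1) =
    (α ^ (N + 1) - β ^ (N + 1)) / (α ^ (k + 1) - β ^ (k + 1)) * lucasnomial α β N k := by
  simp only [lucasnomial, div_eq_mul_inv, prod_mul_distrib]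
  rw [prod_range_succ' (fun r => α ^ (N + 1 - r) - β ^ (N + 1 - r)), prod_range_succ]
  simp only [Nat.add_sub_add_right, Nat.sub_zero]
  ring

theorem lucasnomial_succ_succ {k : ℕ} (h : α ^ (k + 1) ≠ β ^ (k + 1)) (N : ℕ) :
    lucasnomial α β (N + 1) (k + 1) =
      α ^ (k + 1) * lucasnomial α β N (k + 1) + β ^ (N - k) * lucasnomial α β N k := by
  rcases lt_or_ge N k with hlt | hle
  · rw [lucasnomial_eq_zero_of_lt α β (by omega : N + 1 < k + 1),
      lucasnomial_eq_zero_of_lt α β (by omega : N < k + 1), lucasnomial_eq_zero_of_lt α β hlt]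
    ring
  · obtain ⟨d, rfl⟩ := Nat.exists_eq_add_of_le hle
    have hk : α ^ (k + 1) - β ^ (k + 1) ≠ 0 := sub_ne_zero.2 h
    rw [lucasnomial_succ_succ_eq_div_mul, lucasnomial_succ_right, Nat.add_sub_cancel_left]
    field_simp
    ring

end Lucasnomial

section GeneratingFunctions

theorem coeff_zero_mul_one_sub_C_mul_X {R : Type*} [CommRing R] (f : R⟦X⟧) (c : R) :
    coeff 0 (f * (1 - C c * X)) = coeff 0 f := by
  simp [mul_comm f]

theorem coeff_succ_mul_one_sub_C_mul_X {R : Type*} [CommRing R] (f : R⟦X⟧) (c : R) (j : ℕ) :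
    coeff (j + 1) (f * (1 - C c * X)) = coeff (j + 1) f - c * coeff j f := by
  rw [mul_sub, mul_one, map_sub, ← mul_assoc, mul_comm f, mul_assoc, coeff_C_mul, coeff_succ_mul_X]

variable {K : Type*} [Field K] (α β : K)

/-- The series `∏_{i < N} (1 - α^(N-1-i) β^i X)`, given by its coefficients. -/
noncomputable def lucasElemSeries (N : ℕ) : K⟦X⟧ :=
  mk fun j => (-1) ^ j * (α * β) ^ j.choose 2 * lucasnomial α β N j

/-- The inverse of `lucasElemSeries α β N`. -/
noncomputable def lucasComplSeries (N : ℕ) : K⟦X⟧ :=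
  mk fun l => lucasnomial α β (N + l - 1) l

theorem lucasElemSeries_zero : lucasElemSeries α β 0 = 1 := by
  ext (_ | j)
  · simp [lucasElemSeries]
  · simp [lucasElemSeries, lucasnomial_eq_zero_of_lt α β (Nat.succ_pos j)]

theorem lucasComplSeries_zero : lucasComplSeries α β 0 = 1 := by
  ext (_ | l)
  · simp [lucasComplSeries]
  · simp [lucasComplSeries, lucasnomial_eq_zero_of_lt α β (Nat.lt_succ_self l)]

variable {α β}

theorem lucasElemSeries_succ (h : ∀ m, α ^ (m + 1) ≠ β ^ (m + 1)) (N : ℕ) :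
    lucasElemSeries α β (N + 1) = rescale α (lucasElemSeries α β N) * (1 - C (β ^ N) * X) := by
  ext (_ | j)
  · simp only [coeff_zero_mul_one_sub_C_mul_X, coeff_rescale, lucasElemSeries, coeff_mk]
    simp
  · have hβ : β ^ j * β ^ (N - j) * lucasnomial α β N j = β ^ N * lucasnomial α β N j := by
      rcases le_or_gt j N with hjN | hNj
      · rw [← pow_add, Nat.add_sub_cancel' hjN]
      · simp [lucasnomial_eq_zero_of_lt α β hNj]
    simp only [coeff_succ_mul_one_sub_C_mul_X, coeff_rescale, lucasElemSeries, coeff_mk,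
      lucasnomial_succ_succ α β (h j), Nat.choose_succ_succ', Nat.choose_one_right]
    linear_combination (-1) ^ (j + 1) * (α * β) ^ j.choose 2 * α ^ j * hβ

theorem lucasComplSeries_succ_mul (h : ∀ m, α ^ (m + 1) ≠ β ^ (m + 1)) (N : ℕ) :
    lucasComplSeries α β (N + 1) * (1 - C (β ^ N) * X) = rescale α (lucasComplSeries α β N) := by
  ext (_ | l)
  · simp only [coeff_zero_mul_one_sub_C_mul_X, coeff_rescale, lucasComplSeries, coeff_mk]
    simp
  · have hpascal := lucasnomial_succ_succ α β (h l) (N + l)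
    simp only [coeff_succ_mul_one_sub_C_mul_X, coeff_rescale, lucasComplSeries, coeff_mk,
      Nat.add_sub_cancel_right] at hpascal ⊢
    rw [show N + 1 + (l + 1) - 1 = N + l + 1 by omega, show N + 1 + l - 1 = N + l by omega,
      show N + (l + 1) - 1 = N + l by omega, hpascal]
    ring

theorem lucasElemSeries_mul_lucasComplSeries (h : ∀ m, α ^ (m + 1) ≠ β ^ (m + 1)) (N : ℕ) :
    lucasElemSeries α β N * lucasComplSeries α β N = 1 := by
  induction N with
  | zero => rw [lucasElemSeries_zero, lucasComplSeries_zero, one_mul]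
  | succ N ih =>
    rw [lucasElemSeries_succ h, mul_assoc, mul_comm (1 - _), lucasComplSeries_succ_mul h,
      ← map_mul, ih, map_one]

theorem sum_antidiagonal_lucasnomial_mul (h : ∀ m, α ^ (m + 1) ≠ β ^ (m + 1)) (N m : ℕ) :
    ∑ p ∈ antidiagonal m, (-1) ^ p.1 * (α * β) ^ p.1.choose 2 * lucasnomial α β N p.1 *
      lucasnomial α β (N + p.2 - 1) p.2 = if m = 0 then 1 else 0 := by
  simpa [coeff_mul, lucasElemSeries, lucasComplSeries] using
    congrArg (coeff m) (lucasElemSeries_mul_lucasComplSeries h N)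

end GeneratingFunctions

section Hessenberg

variable {R : Type*} [CommRing R]

theorem det_eq_of_mulVec_eq_single_last {K : ℕ} (M : Matrix (Fin (K + 1)) (Fin (K + 1)) R)
    (a c : R) (hzero : ∀ i j : Fin (K + 1), (i : ℕ) + 1 < j → M i j = 0)
    (hsuper : ∀ i j : Fin (K + 1), (j : ℕ) = i + 1 → M i j = a)
    (x : Fin (K + 1) → R) (hx : x 0 = 1) (hMx : M *ᵥ x = Pi.single (Fin.last K) c) :
    M.det = (-a) ^ K * c := by
  have cramer_step : M.det = (M.updateCol 0 (Pi.single (Fin.last K) c)).det := by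
    rw [← hMx, ← cramer_apply, cramer_eq_adjugate_mulVec, mulVec_mulVec, adjugate_mul,
      smul_mulVec, one_mulVec, Pi.smul_apply, hx, smul_eq_mul, mul_one]
  set N : Matrix (Fin K) (Fin K) R := Matrix.of fun r s => M r.castSucc s.succ
  have minor : (M.updateCol 0 (Pi.single (Fin.last K) c)).submatrix (Fin.last K).succAbove
      Fin.succ = N := by
    ext r s
    simp [N, Fin.succAbove_last]
  have minor_det : N.det = a ^ K := by
    rw [det_of_isLowerTriangular N fun r s hrs => hzero _ _ (by simpa using hrs)]
    simp [N, hsuper]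
  rw [cramer_step, det_succ_column_zero, sum_eq_single (Fin.last K)]
  · rw [minor, minor_det]
    simp only [updateCol_self, Pi.single_eq_same, Fin.val_last]
    rw [neg_pow]
    ring
  · intro i _ hi
    simp [hi]
  · simp

theorem sum_range_hessenberg_row (a : R) (t u : ℕ → R) {i K : ℕ} (hi : i ≤ K) :
    ∑ l ∈ range (K + 1), (if l = i + 1 then a else if l ≤ i then t (i - l) else 0) * u l =
      ∑ p ∈ antidiagonal i, t p.1 * u p.2 + if i < K then a * u (i + 1) else 0 := by
  rw [← sum_range_add_sum_Ico _ (by omega : i + 1 ≤ K + 1), ← Nat.sum_antidiagonal_swap]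
  simp only [Prod.fst_swap, Prod.snd_swap]
  rw [Nat.sum_antidiagonal_eq_sum_range_succ (fun l d => t d * u l)]
  congr 1
  · refine sum_congr rfl fun l hl => ?_
    have hl : l ≤ i := Nat.lt_succ_iff.1 (mem_range.1 hl)
    rw [if_neg (by omega), if_pos hl, mul_comm]
  · have hsuper : (if i < K then a * u (i + 1) else 0) =
        ∑ l ∈ Ico (i + 1) (K + 1), if l = i + 1 then a * u l else 0 := by
      simp [sum_ite_eq']
    rw [hsuper]
    refine sum_congr rfl fun l hl => ?_
    have hl : i + 1 ≤ l := (mem_Ico.1 hl).1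
    split_ifs with h1 h2
    · rfl
    · omega
    · exact zero_mul _

theorem det_hessenberg_toeplitz (k : ℕ) (a : R) (t u : ℕ → R) (hu0 : u 0 = 1)
    (hu : ∀ m < k, a * u (m + 1) + ∑ p ∈ antidiagonal m, t p.1 * u p.2 = 0) :
    (Matrix.of fun i j : Fin k =>
      if (j : ℕ) = i + 1 then a else if (j : ℕ) ≤ i then t (i - j) else 0).det =
      (-a) ^ k * u k := by
  cases k with
  | zero => simp [hu0]
  | succ K =>
    rw [det_eq_of_mulVec_eq_single_last _ a (-a * u (K + 1)) ?_ ?_ (fun l => u l) hu0, pow_succ]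
    · ring
    · ext i
      have hrow := hu i i.isLt
      simp only [mulVec, dotProduct, of_apply]
      rw [Fin.sum_univ_eq_sum_range (fun l =>
          (if l = i + 1 then a else if l ≤ i then t (i - l) else 0) * u l),
        sum_range_hessenberg_row a t u (Nat.lt_succ_iff.1 i.isLt)]
      by_cases hi : (i : ℕ) = K
      · obtain rfl : i = Fin.last K := Fin.ext hi
        simp only [Pi.single_eq_same, Fin.val_last, lt_irrefl, if_false] at hrow ⊢
        linear_combination hrow
      · rw [Pi.single_eq_of_ne (fun h => hi (by simp [h])), if_pos (by omega)]
        linear_combination hrow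
    · intro i j hij
      rw [of_apply, if_neg (by omega), if_neg (by omega)]
    · intro i j hij
      simp [hij]

end Hessenberg

section Fibonomial

open Real goldenRatio

@[simp]
theorem fibonomial_zero_right (N : ℕ) : fibonomial N 0 = 1 := prod_range_zero _

theorem fibonomial_eq_lucasnomial (N k : ℕ) : fibonomial N k = lucasnomial φ ψ N k := by
  refine prod_congr rfl fun r _ => ?_
  rw [coe_fib_eq, coe_fib_eq, div_div_div_cancel_right₀ (by positivity)]

theorem goldenRatio_pow_ne_goldenConj_pow (m : ℕ) : φ ^ (m + 1) ≠ ψ ^ (m + 1) := by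
  have hfib : (Nat.fib (m + 1) : ℝ) ≠ 0 := Nat.cast_ne_zero.2 (Nat.fib_pos.2 m.succ_pos).ne'
  rw [coe_fib_eq] at hfib
  exact sub_ne_zero.1 (div_ne_zero_iff.1 hfib).1

theorem sum_antidiagonal_fibonomial (n m : ℕ) :
    ∑ p ∈ antidiagonal m, (-1) ^ (p.1 + 1).choose 2 * fibonomial (n + 1) p.1 *
      fibonomial (n + p.2) p.2 = if m = 0 then 1 else 0 := by
  rw [← sum_antidiagonal_lucasnomial_mul goldenRatio_pow_ne_goldenConj_pow (n + 1) m]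
  refine sum_congr rfl fun p _ => ?_
  rw [goldenRatio_mul_goldenConj, fibonomial_eq_lucasnomial, fibonomial_eq_lucasnomial,
    Nat.choose_succ_succ', Nat.choose_one_right, pow_add, Nat.add_right_comm, Nat.add_sub_cancel]

theorem fibonomial_hessenberg_relation (n : ℕ) {a : ℝ} (ha : a ≠ 0) (m : ℕ) :
    a * (fibonomial (n + (m + 1)) (m + 1) / (-a) ^ (m + 1)) +
      ∑ p ∈ antidiagonal m, (-1) ^ ((p.1 + 1) * p.1 / 2) * fibonomial (n + 1) (p.1 + 1) /
        a ^ p.1 * (fibonomial (n + p.2) p.2 / (-a) ^ p.2) = 0 := by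
  have hconv := sum_antidiagonal_fibonomial n (m + 1)
  rw [Nat.sum_antidiagonal_succ, if_neg (Nat.succ_ne_zero m)] at hconv
  have term : ∀ p ∈ antidiagonal m,
      (-1) ^ ((p.1 + 1) * p.1 / 2) * fibonomial (n + 1) (p.1 + 1) / a ^ p.1 *
        (fibonomial (n + p.2) p.2 / (-a) ^ p.2) =
      -((-1) ^ (p.1 + 1 + 1).choose 2 * fibonomial (n + 1) (p.1 + 1) *
        fibonomial (n + p.2) p.2) / (-a) ^ m := by
    rintro ⟨d, l⟩ hdl
    rw [HasAntidiagonal.mem_antidiagonal] at hdl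
    subst hdl
    rw [Nat.choose_succ_succ', Nat.choose_one_right, Nat.choose_two_right, Nat.add_sub_cancel,
      pow_add, pow_add (-a), neg_pow a d, pow_succ]
    field_simp
  rw [sum_congr rfl term, ← sum_div, sum_neg_distrib]
  simp only [zero_add, fibonomial_zero_right, Nat.choose_eq_zero_of_lt one_lt_two, pow_zero,
    one_mul] at hconv
  rw [eq_neg_of_add_eq_zero_right hconv, neg_neg, pow_succ]
  field_simp
  ring

end Fibonomial

theorem fibonomial_det_hessenberg_column_general_general (n k : ℕ)
    (a : ℝ) (ha : a ≠ 0) :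
    fibonomial (n + k) k =
      Matrix.det (Matrix.of fun i j : Fin k =>
        if (j : ℕ) = (i : ℕ) + 1 then a
        else if (j : ℕ) ≤ (i : ℕ) then
          (-1 : ℝ) ^ ((((i : ℕ) - (j : ℕ)) + 1) * ((i : ℕ) - (j : ℕ)) / 2) *
            fibonomial (n + 1) (((i : ℕ) - (j : ℕ)) + 1) / a ^ ((i : ℕ) - (j : ℕ))
        else 0) := by
  rw [det_hessenberg_toeplitz k a
    (fun d => (-1) ^ ((d + 1) * d / 2) * fibonomial (n + 1) (d + 1) / a ^ d)
    (fun l => fibonomial (n + l) l / (-a) ^ l) (by simp)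
    (fun m _ => fibonomial_hessenberg_relation n ha m)]
  exact (mul_div_cancel₀ _ (pow_ne_zero k (neg_ne_zero.2 ha))).symm

theorem fibonomial_det_hessenberg_column_general (n k : ℕ) (hk : 1 ≤ k)
    (a : ℝ) (ha : a ≠ 0) :
    fibonomial (n + k) k =
      Matrix.det (Matrix.of fun i j : Fin k =>
        if (j : ℕ) = (i : ℕ) + 1 then a
        else if (j : ℕ) ≤ (i : ℕ) then
          (-1 : ℝ) ^ ((((i : ℕ) - (j : ℕ)) + 1) * ((i : ℕ) - (j : ℕ)) / 2) *
            fibonomial (n + 1) (((i : ℕ) - (j : ℕ)) + 1) / a ^ ((i : ℕ) - (j : ℕ))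
        else 0) :=
  fibonomial_det_hessenberg_column_general_general n k a ha
end

section
/- For all integers 1 ≤ k ≤ n: s_{n,k} = det N, where N is the k×k real matrix (rows and columns indexed 1,…,k) defined by N(i,1) = i · (−1)^{i(i−1)/2} C(n, i)_F, N(i,j) = (−1)^{(i−j+1)(i−j)/2} C(n, i−j+1)_F for 2 ≤ j ≤ i, N(i, i+1) = 1, and N(i,j) = 0 for j > i+1. -/
/-- Power sums `s_{n,r} = Σ_{j=0}^{n−1} (α^{n−1−j} β^{j})^r` with
`α = (1+√5)/2`, `β = (1−√5)/2`. -/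
noncomputable def powerSum (n r : ℕ) : ℝ :=
  ∑ j ∈ Finset.range n,
    (((1 + Real.sqrt 5) / 2) ^ (n - 1 - j) * ((1 - Real.sqrt 5) / 2) ^ j) ^ r

/-!
Let `e_r` and `p_r` be the elementary symmetric functions and the power sums of the `n` numbers
`α^(n-1-j) β^j`. Passing from `n` to `n + 1` multiplies these numbers by `α` and adds `β^n`,
so the recursion for `e_r` is the Fibonacci analogue of Pascal's rule and
`e_r = (-1)^(r(r-1)/2) C(n,r)_F`. Newton's identities `i e_i = ∑_{j<i} (-1)^j e_(i-1-j) p_(j+1)`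
form a unitriangular system in the unknowns `(-1)^j p_(j+1)`; by Cramer's rule `p_k` is the
determinant in the statement, whose columns are those of the Cramer matrix rotated by one place.
-/

open Finset Matrix MvPolynomial goldenRatio

section Newton

variable {R : Type*} [CommRing R]

noncomputable def newtonMatrix (e : ℕ → R) (k : ℕ) : Matrix (Fin k) (Fin k) R :=
  of fun i j => if (j : ℕ) = 0 then ((i : ℕ) + 1 : R) * e (i + 1)
    else if (j : ℕ) ≤ i + 1 then e (i + 1 - j) else 0

theorem newtonMatrix_map {S F : Type*} [CommRing S] [FunLike F R S] [RingHomClass F R S] (f : F)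
    (e : ℕ → R) (k : ℕ) :
    (newtonMatrix e k).map f = newtonMatrix (fun r => f (e r)) k := by
  ext i j
  simp only [newtonMatrix, map_apply, of_apply]
  split_ifs <;> simp

theorem det_newtonMatrix {e p : ℕ → R} (he : e 0 = 1)
    (hnewton : ∀ k : ℕ, ((k : R) + 1) * e (k + 1) =
      ∑ j ∈ range (k + 1), (-1) ^ j * e (k - j) * p (j + 1)) (m : ℕ) :
    (newtonMatrix e (m + 1)).det = p (m + 1) := by
  set T : Matrix (Fin (m + 1)) (Fin (m + 1)) R :=
    of fun i j => if (j : ℕ) ≤ i then e (i - j) else 0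
  set y : Fin (m + 1) → R := fun j => (-1) ^ (j : ℕ) * p (j + 1)
  have hT : T.det = 1 := by
    rw [det_of_isLowerTriangular T fun i j hij => if_neg (not_le.2 (show i < j from hij))]
    simp [T, he]
  have hTy : T *ᵥ y = fun i : Fin (m + 1) => ((i : ℕ) + 1 : R) * e (i + 1) := by
    ext i
    have hsum := Fin.sum_univ_eq_sum_range
      (fun j => if j ≤ i then (-1) ^ j * e (i - j) * p (j + 1) else 0) (m + 1)
    have hrange : (range (m + 1)).filter (· ≤ (i : ℕ)) = range (i + 1) := by
      ext j
      simp only [mem_filter, mem_range]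
      omega
    rw [← sum_filter (s := range (m + 1)), hrange, ← hnewton] at hsum
    rw [← hsum, mulVec, dotProduct]
    refine sum_congr rfl fun j _ => ?_
    simp only [T, y, of_apply]
    split_ifs <;> ring
  have hy : T.cramer (T *ᵥ y) = y := by
    rw [cramer_eq_adjugate_mulVec, mulVec_mulVec, adjugate_mul, hT, one_smul, one_mulVec]
  have hrot : newtonMatrix e (m + 1) =
      (T.updateCol (Fin.last m) (T *ᵥ y)).submatrix id (finRotate (m + 1)).symm := by
    ext i j
    rw [submatrix_apply, id, finRotate_symm_apply, updateCol_apply, hTy]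
    by_cases hj : j = 0
    · have hl : j - 1 = Fin.last m := by rw [hj, zero_sub]; exact Fin.ext Fin.coe_neg_one
      rw [if_pos hl]
      simp [newtonMatrix, hj]
    · have hj' : ((j - 1 : Fin (m + 1)) : ℕ) = j - 1 := by simp [Fin.coe_sub_one, hj]
      have hjl : j - 1 ≠ Fin.last m := by
        rw [Ne, Fin.ext_iff, hj', Fin.val_last]; omega
      have hj0 : (j : ℕ) ≠ 0 := fun h => hj (Fin.ext h)
      simp only [newtonMatrix, T, of_apply, if_neg hjl, hj', if_neg hj0]
      split_ifs <;> first | rfl | omega | congr 1; omega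
  rw [hrot, det_permute', Equiv.Perm.sign_symm, sign_finRotate, ← cramer_apply, hy]
  simp [y, ← mul_assoc, ← pow_add]

theorem MvPolynomial.mul_esymm_succ_eq_sum_range (σ : Type*) [Fintype σ] (k : ℕ) :
    ((k : MvPolynomial σ R) + 1) * esymm σ R (k + 1) =
      ∑ j ∈ range (k + 1), (-1) ^ j * esymm σ R (k - j) * psum σ R (j + 1) := by
  have h := mul_esymm_eq_sum σ R (k + 1)
  rw [sum_filter, Nat.sum_antidiagonal_eq_sum_range_succ
    (fun a b => if a < k + 1 then (-1) ^ a * esymm σ R a * psum σ R b else 0),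
    sum_range_succ, if_neg (lt_irrefl _), add_zero, ← sum_range_reflect, mul_sum] at h
  push_cast at h
  rw [h]
  refine sum_congr rfl fun j hj => ?_
  obtain ⟨i, rfl⟩ : ∃ i, k = j + i := ⟨k - j, by rw [mem_range] at hj; omega⟩
  have hsign : (-1 : MvPolynomial σ R) ^ (j + i + 1 + 1) * (-1) ^ i = (-1) ^ j := by
    rw [← pow_add, show j + i + 1 + 1 + i = j + 2 * (i + 1) by ring, pow_add, pow_mul,
      neg_one_sq, one_pow, mul_one]
  rw [if_pos (by omega), Nat.add_sub_cancel_left, show j + i + 1 - i = j + 1 by omega, ← hsign]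
  ring

theorem MvPolynomial.psum_eq_det_newtonMatrix (σ : Type*) [Fintype σ] (m : ℕ) :
    psum σ R (m + 1) = (newtonMatrix (esymm σ R) (m + 1)).det :=
  (det_newtonMatrix (esymm_zero σ R) (mul_esymm_succ_eq_sum_range σ) m).symm

theorem Multiset.sum_map_pow_eq_det_newtonMatrix (s : Multiset R) (m : ℕ) :
    (s.map (· ^ (m + 1))).sum = (newtonMatrix s.esymm (m + 1)).det := by
  obtain ⟨l, rfl⟩ : ∃ l : List R, (l : Multiset R) = s := Quot.exists_rep s
  have hl : (univ : Finset (Fin l.length)).val.map l.get = l := by simp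
  have h := congrArg (aeval (R := R) l.get) (psum_eq_det_newtonMatrix (Fin l.length) m)
  rw [AlgHom.map_det, AlgHom.mapMatrix_apply, newtonMatrix_map] at h
  simp only [aeval_esymm_eq_multiset_esymm, hl, psum, map_sum, map_pow, aeval_X] at h
  rw [← h, Finset.sum_eq_multiset_sum, ← hl, Multiset.map_map]
  rfl

end Newton

theorem Multiset.esymm_cons {R : Type*} [CommSemiring R] (a : R) (s : Multiset R) (r : ℕ) :
    (a ::ₘ s).esymm (r + 1) = s.esymm (r + 1) + a * s.esymm r := by
  simp only [esymm, powersetCard_cons, map_add, sum_add, map_map, Function.comp_def, prod_cons,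
    sum_map_mul_left]

theorem fibonomial_of_lt {n k : ℕ} (h : n < k) : fibonomial n k = 0 :=
  prod_eq_zero (mem_range.2 h) (by simp)

theorem fibonomial_succ (n k : ℕ) :
    fibonomial n (k + 1) = fibonomial n k * (Nat.fib (n - k) / Nat.fib (k + 1)) :=
  prod_range_succ _ _

theorem fibonomial_succ_succ (n k : ℕ) :
    fibonomial (n + 1) (k + 1) = Nat.fib (n + 1) / Nat.fib (k + 1) * fibonomial n k := by
  induction k with
  | zero => simp [fibonomial]
  | succ k ih =>
    rw [fibonomial_succ, ih, fibonomial_succ, Nat.add_sub_add_right]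
    ring

theorem goldenRatio_pow_mul_fib_add_goldenConj_pow_mul_fib (m k : ℕ) :
    φ ^ (k + 1) * Nat.fib m + ψ ^ m * Nat.fib (k + 1) = Nat.fib (m + k + 1) := by
  simp only [Real.coe_fib_eq]
  field_simp
  ring

theorem fibonomial_pascal (m k : ℕ) :
    fibonomial (m + k + 1) (k + 1) =
      φ ^ (k + 1) * fibonomial (m + k) (k + 1) + ψ ^ m * fibonomial (m + k) k := by
  have hfib : (Nat.fib (k + 1) : ℝ) ≠ 0 := by exact_mod_cast (Nat.fib_pos.2 k.succ_pos).ne'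
  rw [fibonomial_succ_succ, fibonomial_succ, Nat.add_sub_cancel,
    ← goldenRatio_pow_mul_fib_add_goldenConj_pow_mul_fib]
  field_simp

noncomputable def fibRoots (n : ℕ) : Multiset ℝ :=
  (Multiset.range n).map fun j => φ ^ (n - 1 - j) * ψ ^ j

theorem fibRoots_succ (n : ℕ) : fibRoots (n + 1) = ψ ^ n ::ₘ (fibRoots n).map (φ • ·) := by
  rw [fibRoots, Multiset.range_succ, Multiset.map_cons, fibRoots, Multiset.map_map]
  congr 1
  · simp
  · refine Multiset.map_congr rfl fun j hj => ?_
    rw [Multiset.mem_range] at hj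
    rw [Function.comp_apply, smul_eq_mul, show n + 1 - 1 - j = n - 1 - j + 1 by omega, pow_succ]
    ring

theorem esymm_fibRoots (n r : ℕ) :
    (fibRoots n).esymm r = (-1) ^ (r * (r - 1) / 2) * fibonomial n r := by
  induction n generalizing r with
  | zero =>
    cases r <;> simp [fibRoots, Multiset.esymm, fibonomial, Multiset.powersetCard_zero_right]
  | succ n ih =>
    cases r with
    | zero => simp [Multiset.esymm, fibonomial]
    | succ r =>
      rw [fibRoots_succ, Multiset.esymm_cons, ← Multiset.pow_smul_esymm,
        ← Multiset.pow_smul_esymm, smul_eq_mul, smul_eq_mul, ih, ih, Nat.triangle_succ]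
      rcases le_or_gt r n with hrn | hnr
      · obtain ⟨m, rfl⟩ : ∃ m, n = m + r := ⟨n - r, by omega⟩
        have hsign : (-1 : ℝ) ^ r = ψ ^ r * φ ^ r := by
          rw [← mul_pow, Real.goldenConj_mul_goldenRatio]
        rw [fibonomial_pascal, pow_add]
        linear_combination -(-1 : ℝ) ^ (r * (r - 1) / 2) * fibonomial (m + r) r * ψ ^ m * hsign
      · rw [fibonomial_of_lt hnr, fibonomial_of_lt (by omega), fibonomial_of_lt (by omega)]
        ring

theorem powerSum_eq_sum_map_fibRoots (n r : ℕ) :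
    powerSum n r = ((fibRoots n).map (· ^ r)).sum := by
  rw [powerSum, fibRoots, Multiset.map_map, Finset.sum_eq_multiset_sum]
  rfl

theorem powerSum_det_fibonomial_general (n k : ℕ) (hk : 1 ≤ k) :
    powerSum n k =
      Matrix.det (Matrix.of fun i j : Fin k =>
        if (j : ℕ) = 0 then
          ((i : ℕ) + 1 : ℝ) * (-1 : ℝ) ^ (((i : ℕ) + 1) * (i : ℕ) / 2) *
            fibonomial n ((i : ℕ) + 1)
        else if (j : ℕ) = (i : ℕ) + 1 then 1
        else if (j : ℕ) ≤ (i : ℕ) then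
          (-1 : ℝ) ^ ((((i : ℕ) - (j : ℕ)) + 1) * ((i : ℕ) - (j : ℕ)) / 2) *
            fibonomial n (((i : ℕ) - (j : ℕ)) + 1)
        else 0) := by
  obtain ⟨m, rfl⟩ : ∃ m, k = m + 1 := ⟨k - 1, by omega⟩
  rw [powerSum_eq_sum_map_fibRoots, Multiset.sum_map_pow_eq_det_newtonMatrix]
  congr 1
  ext i j
  simp only [newtonMatrix, of_apply]
  split_ifs with _ _ hji <;> try first | rfl | omega
  · rw [esymm_fibRoots, Nat.add_sub_cancel]
    ring
  · simp [hji, esymm_fibRoots, fibonomial]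
  · rw [show (i : ℕ) + 1 - j = i - j + 1 by omega, esymm_fibRoots, Nat.add_sub_cancel]

theorem powerSum_det_fibonomial (n k : ℕ) (hk : 1 ≤ k) (hkn : k ≤ n) :
    powerSum n k =
      Matrix.det (Matrix.of fun i j : Fin k =>
        if (j : ℕ) = 0 then
          ((i : ℕ) + 1 : ℝ) * (-1 : ℝ) ^ (((i : ℕ) + 1) * (i : ℕ) / 2) *
            fibonomial n ((i : ℕ) + 1)
        else if (j : ℕ) = (i : ℕ) + 1 then 1
        else if (j : ℕ) ≤ (i : ℕ) then
          (-1 : ℝ) ^ ((((i : ℕ) - (j : ℕ)) + 1) * ((i : ℕ) - (j : ℕ)) / 2) *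
            fibonomial n (((i : ℕ) - (j : ℕ)) + 1)
        else 0) :=
  powerSum_det_fibonomial_general n k hk
end
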